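/- arXiv:2103.01911 — 4 statements merged into one kernel-verified Lean document; each statement's English description precedes it below -/
import Mathlib

section
/- Let A and H be atoms such that the pair A, H is linear (no variable occurs more than once in the pair; in particular A and H are variable-disjoint and each of them is linear). If θ is a most general unifier of A and H, then the atom Aθ is linear. -/
/-! # First-order terms, substitutions, unification -/

inductive Term (F : Type) (V : Type) : Type
  | var : V → Term F V
  | app : F → List (Term F V) → Term F V

namespace Term

variable {F V : Type}

/-- The variable `v` occurs in the term. -/
inductive VarIn (v : V) : Term F V → Prop
  | var : VarIn v (Term.var v)
  | app {f : F} {ts : List (Term F V)} {t : Term F V} :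
      t ∈ ts → VarIn v t → VarIn v (Term.app f ts)

/-- A term is ground if it contains no variables. -/
def Ground (t : Term F V) : Prop := ∀ v, ¬ VarIn v t

/-- Application of a substitution (a map from variables to terms) to a term. -/
def subst (σ : V → Term F V) : Term F V → Term F V
  | var x => σ x
  | app f ts => app f (ts.attach.map fun ⟨t, _⟩ => t.subst σ)

/-- Number of occurrences of the variable `v` in a term. -/
def count [DecidableEq V] (v : V) : Term F V → ℕ
  | var x => if x = v then 1 else 0
  | app _ ts => (ts.attach.map fun ⟨t, _⟩ => t.count v).sum

/-- A term (or atom) is linear if no variable occurs in it more than once. -/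
def Linear [DecidableEq V] (t : Term F V) : Prop := ∀ v, count v t ≤ 1

def IsVar : Term F V → Prop
  | var _ => True
  | app _ _ => False

end Term

/-- A substitution. -/
abbrev Subst (F V : Type) := V → Term F V

/-- Composition of substitutions: `(σ.comp η)` is `ση`. -/
def Subst.comp {F V : Type} (σ η : Subst F V) : Subst F V := fun v => (σ v).subst η

/-- The substitution `{X/t}`. -/
def subst1 {F V : Type} [DecidableEq V] (X : V) (t : Term F V) : Subst F V :=
  fun v => if v = X then t else Term.var v

variable {F V : Type}

/-- `σ` unifies the two terms (or atoms) `A` and `H`. -/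
def IsUnifierPair (σ : Subst F V) (A H : Term F V) : Prop := A.subst σ = H.subst σ

/-- `σ` is a most general unifier of `A` and `H`. -/
def IsMGUPair (σ : Subst F V) (A H : Term F V) : Prop :=
  IsUnifierPair σ A H ∧ ∀ τ, IsUnifierPair τ A H → ∃ η, τ = σ.comp η

/-- An equation between terms. -/
abbrev Eqn (F V : Type) := Term F V × Term F V

/-- A set of equations. -/
abbrev EqSet (F V : Type) := Set (Eqn F V)

def Eqn.subst (σ : Subst F V) (e : Eqn F V) : Eqn F V := (e.1.subst σ, e.2.subst σ)

/-- `σ` is a unifier of the equation set `E`. -/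
def IsUnifier (σ : Subst F V) (E : EqSet F V) : Prop := ∀ e ∈ E, e.1.subst σ = e.2.subst σ

def Unifiable (E : EqSet F V) : Prop := ∃ σ, IsUnifier σ E

/-- `σ` is a most general unifier of the equation set `E`. -/
def IsMGU (σ : Subst F V) (E : EqSet F V) : Prop :=
  IsUnifier σ E ∧ ∀ τ, IsUnifier τ E → ∃ η, τ = σ.comp η

/-! # The Martelli–Montanari algorithm (MMA) and its occur-check-less version MMA⁻ -/

/-- The variable `X` occurs in the equation `e`. -/
def occursInEqn (X : V) (e : Eqn F V) : Prop := Term.VarIn X e.1 ∨ Term.VarIn X e.2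

/-- The variable `X` occurs in equations of `E` other than `e`. -/
def occursElsewhere (X : V) (e : Eqn F V) (E : EqSet F V) : Prop :=
  ∃ e' ∈ E, e' ≠ e ∧ occursInEqn X e'

/-- Action (2) of MMA is applicable: `E` contains a clash `f(s₁,…,sₘ) = g(t₁,…,tₙ)`
(distinct function symbols; in a signature with arities, the same name with different
numbers of arguments also counts as distinct symbols). -/
def Clash (E : EqSet F V) : Prop :=
  ∃ f ss g ts, (Term.app f ss, Term.app g ts) ∈ E ∧ (f ≠ g ∨ ss.length ≠ ts.length)

/-- Action (6) of MMA (the occur-check failure) is applicable to `E`. -/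
def OccApplicable (E : EqSet F V) : Prop :=
  ∃ X t, (Term.var X, t) ∈ E ∧ Term.var X ≠ t ∧ Term.VarIn X t

/-- A (non-failing) step of MMA: actions (1), (3), (4), (5). -/
inductive MMAStep [DecidableEq V] : EqSet F V → EqSet F V → Prop
  | decomp {E : EqSet F V} {f : F} {ss ts : List (Term F V)} :
      (Term.app f ss, Term.app f ts) ∈ E → ss.length = ts.length →
      MMAStep E ((E \ {(Term.app f ss, Term.app f ts)}) ∪ {e | e ∈ ss.zip ts})
  | del {E : EqSet F V} {X : V} : (Term.var X, Term.var X) ∈ E →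
      MMAStep E (E \ {(Term.var X, Term.var X)})
  | orient {E : EqSet F V} {X : V} {t : Term F V} : (t, Term.var X) ∈ E → ¬ t.IsVar →
      MMAStep E ((E \ {(t, Term.var X)}) ∪ {(Term.var X, t)})
  | elim {E : EqSet F V} {X : V} {t : Term F V} :
      (Term.var X, t) ∈ E → Term.var X ≠ t → ¬ Term.VarIn X t →
      occursElsewhere X (Term.var X, t) E →
      MMAStep E (insert (Term.var X, t) (Eqn.subst (subst1 X t) '' (E \ {(Term.var X, t)})))

/-- `E'` is reachable from `E` by (non-failing) MMA steps. -/
def MMAReach [DecidableEq V] (E E' : EqSet F V) : Prop := Relation.ReflTransGen MMAStep E E'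

/-- `E` is not subject to occur-check: no run of MMA on `E` performs action (6),
i.e. action (6) is not applicable to any equation set reachable by MMA from `E`. -/
def NSTO [DecidableEq V] (E : EqSet F V) : Prop :=
  ∀ E', MMAReach E E' → ¬ OccApplicable E'

/-- A solved equation set: `X₁=t₁, …, Xₙ=tₙ` with `X₁,…,Xₙ` distinct variables
none of which occurs in any `tᵢ`. -/
def SolvedSet (E : EqSet F V) : Prop :=
  (∀ e ∈ E, ∃ X, e.1 = Term.var X) ∧
  (∀ e ∈ E, ∀ e' ∈ E, e.1 = e'.1 → e = e') ∧
  (∀ e ∈ E, ∀ e' ∈ E, ∀ X, e.1 = Term.var X → ¬ Term.VarIn X e'.2)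

/-- The relation `X ≻_E Y`: for some equation `X = t` of `E`, `Y ∈ Var(t)`. -/
def succRel (E : EqSet F V) (X Y : V) : Prop := ∃ t, (Term.var X, t) ∈ E ∧ Term.VarIn Y t

/-- A semi-solved equation set: `X₁=t₁, …, Xₙ=tₙ` with `X₁,…,Xₙ` distinct variables,
no `tᵢ` equal to `Xᵢ`, and whenever `Xᵢ` occurs in some `tₖ` then `Xᵢ ≻⁺_E Xᵢ`. -/
def SemiSolved (E : EqSet F V) : Prop :=
  (∀ e ∈ E, ∃ X, e.1 = Term.var X) ∧
  (∀ e ∈ E, ∀ e' ∈ E, e.1 = e'.1 → e = e') ∧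
  (∀ e ∈ E, e.1 ≠ e.2) ∧
  (∀ X, (∃ e' ∈ E, Term.VarIn X e'.2) → (∃ t, (Term.var X, t) ∈ E) →
    Relation.TransGen (succRel E) X X)

/-- `σ` is the substitution represented by the (solved) equation set `E`. -/
def Represents (E : EqSet F V) (σ : Subst F V) : Prop :=
  ∀ v, (∃ t, (Term.var v, t) ∈ E ∧ σ v = t) ∨ ((∀ t, (Term.var v, t) ∉ E) ∧ σ v = Term.var v)

/-- There is an occur-check free run of MMA on `E`: a maximal run never performing
action (6), hence ending either by action (2) (failure on a clash) or with success
(no action applicable any more, the final set being solved). (MMA always terminates,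
so runs are finite.) -/
def ExistsOCFreeRun [DecidableEq V] (E : EqSet F V) : Prop :=
  ∃ E', MMAReach E E' ∧ (Clash E' ∨ SolvedSet E')

/-- `u` is obtained from `s` by replacing *some* of the occurrences of the variable `X`
by the term `t`. -/
inductive ReplSome [DecidableEq V] (X : V) (t : Term F V) : Term F V → Term F V → Prop
  | keep (v : V) : ReplSome X t (Term.var v) (Term.var v)
  | repl : ReplSome X t (Term.var X) t
  | app {f : F} {ss ts : List (Term F V)} :
      List.Forall₂ (ReplSome X t) ss ts → ReplSome X t (Term.app f ss) (Term.app f ts)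

def ReplSomeEqn [DecidableEq V] (X : V) (t : Term F V) (e e' : Eqn F V) : Prop :=
  ReplSome X t e.1 e'.1 ∧ ReplSome X t e.2 e'.2

/-- The labels of the actions of MMA⁻. -/
inductive MLabel (F V : Type) where
  | decomp | del | orient
  | elim (X : V) (t : Term F V)
  | elim' (X : V) (t : Term F V)

/-- A configuration of MMA⁻: the current equation set together with the set of
variables on which action (5) has already been performed. -/
abbrev MState (F V : Type) := EqSet F V × Set V

/-- A (non-failing) step of MMA⁻, labelled by the action used: actions (1), (3), (4),
(5) (with condition `X ≠ t` instead of the occur-check `X ∉ Var(t)`), and (5')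
(replacing some occurrences of `X` by `t` in the other equations, allowed only if
action (5) has previously been performed on an equation with left-hand side `X`). -/
inductive MMStepL [DecidableEq V] : MLabel F V → MState F V → MState F V → Prop
  | decomp {E : EqSet F V} {H : Set V} {f : F} {ss ts : List (Term F V)} :
      (Term.app f ss, Term.app f ts) ∈ E → ss.length = ts.length →
      MMStepL MLabel.decomp (E, H)
        ((E \ {(Term.app f ss, Term.app f ts)}) ∪ {e | e ∈ ss.zip ts}, H)
  | del {E : EqSet F V} {H : Set V} {X : V} : (Term.var X, Term.var X) ∈ E →
      MMStepL MLabel.del (E, H) (E \ {(Term.var X, Term.var X)}, H)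
  | orient {E : EqSet F V} {H : Set V} {X : V} {t : Term F V} :
      (t, Term.var X) ∈ E → ¬ t.IsVar →
      MMStepL MLabel.orient (E, H) ((E \ {(t, Term.var X)}) ∪ {(Term.var X, t)}, H)
  | elim {E : EqSet F V} {H : Set V} {X : V} {t : Term F V} :
      (Term.var X, t) ∈ E → Term.var X ≠ t →
      occursElsewhere X (Term.var X, t) E →
      MMStepL (MLabel.elim X t) (E, H)
        (insert (Term.var X, t) (Eqn.subst (subst1 X t) '' (E \ {(Term.var X, t)})),
         insert X H)
  | elim' {E : EqSet F V} {H : Set V} {X : V} {t : Term F V} {g : Eqn F V → Eqn F V} :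
      (Term.var X, t) ∈ E → Term.var X ≠ t →
      occursElsewhere X (Term.var X, t) E → X ∈ H →
      (∀ e ∈ E \ {(Term.var X, t)}, ReplSomeEqn X t e (g e)) →
      MMStepL (MLabel.elim' X t) (E, H)
        (insert (Term.var X, t) (g '' (E \ {(Term.var X, t)})), H)

/-- A (non-failing) step of MMA⁻. -/
def MMStep [DecidableEq V] (s s' : MState F V) : Prop := ∃ l, MMStepL l s s'

/-- Reachability by (non-failing) steps of MMA⁻. A run of MMA⁻ on an equation set `E`
starts in the configuration `(E, ∅)`; it terminates with failure when action (2) is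
performed (a clash is present), and it may terminate with success when the current
equation set is semi-solved. -/
def MMReach [DecidableEq V] (s s' : MState F V) : Prop := Relation.ReflTransGen MMStep s s'

/-! For a linear pair, unification never has to copy a variable, so some unifier `θ₀` keeps
`Aθ₀` linear: it is built by structural recursion, merging the unifiers of the argument pairs,
whose variables are disjoint. It also satisfies `Aθ₀σ = Aσ` for every unifier `σ`. If `θ` is an
mgu, then `θ₀ = θη`, so `θη` fixes `Aθ₀ = Aθ₀θη`; hence `θ` merely renames the variables of `Aθ₀`
injectively, and `Aθ = Aθ₀θ` is linear. -/

namespace Term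

variable {F V : Type}

@[induction_eliminator]
theorem rec_mem {motive : Term F V → Prop} (var : ∀ x, motive (Term.var x))
    (app : ∀ f ts, (∀ t ∈ ts, motive t) → motive (Term.app f ts)) : ∀ t, motive t
  | .var x => var x
  | .app f ts => app f ts fun t _ => rec_mem var app t
termination_by t => sizeOf t
decreasing_by
  have := List.sizeOf_lt_of_mem ‹t ∈ ts›
  simp only [Term.app.sizeOf_spec]
  omega

@[simp] theorem subst_var (σ : Subst F V) (x : V) : (Term.var x).subst σ = σ x := by
  simp [Term.subst]

@[simp] theorem subst_app (σ : Subst F V) (f : F) (ts : List (Term F V)) :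
    (Term.app f ts).subst σ = Term.app f (ts.map (·.subst σ)) := by
  simp [Term.subst]

theorem varIn_var_iff {v x : V} : VarIn v (Term.var x : Term F V) ↔ v = x :=
  ⟨fun h => by cases h; rfl, fun h => h ▸ .var⟩

theorem varIn_app_iff {v : V} {f : F} {ts : List (Term F V)} :
    VarIn v (Term.app f ts) ↔ ∃ t ∈ ts, VarIn v t :=
  ⟨fun h => by cases h; exact ⟨_, ‹_›, ‹_›⟩, fun ⟨_, ht, hv⟩ => .app ht hv⟩

theorem subst_congr {σ σ' : Subst F V} {t : Term F V}
    (h : ∀ v, VarIn v t → σ v = σ' v) : t.subst σ = t.subst σ' := by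
  induction t with
  | var x => simpa using h x .var
  | app f ts ih =>
    simp only [subst_app, app.injEq, true_and]
    exact List.map_congr_left fun t ht => ih t ht fun v hv => h v (.app ht hv)

theorem varIn_app_cons_iff {v : V} {f : F} {t : Term F V} {ts : List (Term F V)} :
    VarIn v (Term.app f (t :: ts)) ↔ VarIn v t ∨ VarIn v (Term.app f ts) := by
  simp [varIn_app_iff]

theorem subst_eq_self {σ : Subst F V} {t : Term F V}
    (h : ∀ v, VarIn v t → σ v = Term.var v) : t.subst σ = t := by
  induction t with
  | var x => simpa using h x .var
  | app f ts ih =>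
    simp only [subst_app, app.injEq, true_and]
    conv_rhs => rw [← List.map_id ts]
    exact List.map_congr_left fun t ht => ih t ht fun v hv => h v (.app ht hv)

theorem eq_var_of_subst_eq_self {σ : Subst F V} {t : Term F V} (h : t.subst σ = t) :
    ∀ v, VarIn v t → σ v = Term.var v := by
  induction t with
  | var x => intro v hv; cases hv; simpa using h
  | app f ts ih =>
    simp only [subst_app, app.injEq, true_and] at h
    intro v hv
    obtain ⟨t, ht, hv⟩ := varIn_app_iff.1 hv
    exact ih t ht (List.map_inj_left.1 (h.trans (List.map_id ts).symm) t ht) v hv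

theorem eq_var_of_subst_eq_var {σ : Subst F V} {t : Term F V} {v w : V}
    (h : t.subst σ = Term.var v) (hw : VarIn w t) : σ w = Term.var v := by
  cases t with
  | var x => rw [varIn_var_iff.1 hw]; simpa using h
  | app f ts => simp at h

theorem subst_subst (σ η : Subst F V) (t : Term F V) :
    (t.subst σ).subst η = t.subst (σ.comp η) := by
  induction t with
  | var x => simp [Subst.comp]
  | app f ts ih =>
    simp only [subst_app, List.map_map, app.injEq, true_and]
    exact List.map_congr_left ih

theorem varIn_subst {w : V} {σ : Subst F V} {t : Term F V} :
    VarIn w (t.subst σ) ↔ ∃ v, VarIn v t ∧ VarIn w (σ v) := by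
  induction t with
  | var x => simp [varIn_var_iff]
  | app f ts ih =>
    simp only [subst_app, varIn_app_iff, List.mem_map, exists_exists_and_eq_and]
    constructor
    · rintro ⟨t, ht, hw⟩
      obtain ⟨v, hv, hw⟩ := (ih t ht).1 hw
      exact ⟨v, ⟨t, ht, hv⟩, hw⟩
    · rintro ⟨v, ⟨t, ht, hv⟩, hw⟩
      exact ⟨t, ht, (ih t ht).2 ⟨v, hv, hw⟩⟩

variable [DecidableEq V]

theorem subst_subst1_of_not_varIn {x : V} {s t : Term F V}
    (hx : ¬ VarIn x t) : t.subst (subst1 x s) = t :=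
  subst_eq_self fun v hv => by
    simp [subst1, show v ≠ x from fun h => hx (h ▸ hv)]

@[simp] theorem count_var (v x : V) :
    count v (Term.var x : Term F V) = if x = v then 1 else 0 := by
  simp [Term.count]

@[simp] theorem count_app (v : V) (f : F) (ts : List (Term F V)) :
    count v (Term.app f ts) = (ts.map (count v)).sum := by
  simp [Term.count]

theorem count_pos_iff {v : V} {t : Term F V} : 0 < count v t ↔ VarIn v t := by
  induction t with
  | var x => rw [count_var, varIn_var_iff, eq_comm (a := v)]; split_ifs <;> simp [*]
  | app f ts ih =>
    simp only [count_app, List.sum_pos_iff_exists_pos_nat, List.mem_map,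
      exists_exists_and_eq_and, varIn_app_iff]
    exact exists_congr fun t => and_congr_right fun ht => ih t ht

theorem count_app_cons (v : V) (f : F) (t : Term F V) (ts : List (Term F V)) :
    count v (Term.app f (t :: ts)) = count v t + count v (Term.app f ts) := by
  simp

theorem count_eq_zero_iff {v : V} {t : Term F V} : count v t = 0 ↔ ¬ VarIn v t := by
  rw [← count_pos_iff, Nat.pos_iff_ne_zero, not_not]

theorem count_le_count_subst {η : Subst F V} {v w : V} (h : η w = Term.var v)
    (t : Term F V) : count w t ≤ count v (t.subst η) := by
  induction t with
  | var x =>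
    by_cases hx : x = w
    · simp [hx, h]
    · simp [hx]
  | app f ts ih =>
    simp only [count_app, subst_app, List.map_map]
    exact List.sum_le_sum ih

theorem Linear.of_subst {η : Subst F V} {t : Term F V} (ht : (t.subst η).Linear)
    (hη : ∀ w, VarIn w t → ∃ v, η w = Term.var v) : t.Linear := by
  intro w
  by_cases hw : VarIn w t
  · obtain ⟨v, hv⟩ := hη w hw
    exact (count_le_count_subst hv t).trans (ht v)
  · simp [count_eq_zero_iff.2 hw]

end Term

open Term

theorem isUnifierPair_app_cons_iff {σ : Subst F V} {f : F} {s t : Term F V}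
    {ss ts : List (Term F V)} :
    IsUnifierPair σ (Term.app f (s :: ss)) (Term.app f (t :: ts)) ↔
      IsUnifierPair σ s t ∧ IsUnifierPair σ (Term.app f ss) (Term.app f ts) := by
  simp [IsUnifierPair]

variable [DecidableEq V]

structure IsLinearUnifier (θ : Subst F V) (A H : Term F V) : Prop where
  unifies : IsUnifierPair θ A H
  linear : (A.subst θ).Linear
  subst_of_isUnifierPair : ∀ σ, IsUnifierPair σ A H → (A.subst θ).subst σ = A.subst σ
  varIn_of_varIn_subst : ∀ w, VarIn w (A.subst θ) → VarIn w A ∨ VarIn w H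

namespace IsLinearUnifier

variable {θ θ' : Subst F V} {A H : Term F V}

theorem symm (h : IsLinearUnifier θ A H) : IsLinearUnifier θ H A where
  unifies := h.unifies.symm
  linear := h.unifies ▸ h.linear
  subst_of_isUnifierPair σ hσ := by rw [← h.unifies, h.subst_of_isUnifierPair σ hσ.symm, hσ]
  varIn_of_varIn_subst w hw := (h.varIn_of_varIn_subst w (h.unifies ▸ hw)).symm

theorem congr (h : IsLinearUnifier θ A H) (hθ : ∀ v, VarIn v A ∨ VarIn v H → θ v = θ' v) :
    IsLinearUnifier θ' A H := by
  have hA : A.subst θ = A.subst θ' := subst_congr fun v hv => hθ v (.inl hv)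
  have hH : H.subst θ = H.subst θ' := subst_congr fun v hv => hθ v (.inr hv)
  exact ⟨hA.symm.trans (h.unifies.trans hH), hA ▸ h.linear, hA ▸ h.subst_of_isUnifierPair,
    hA ▸ h.varIn_of_varIn_subst⟩

theorem var_left {x : V} {t : Term F V} (hx : ¬ VarIn x t) (ht : t.Linear) :
    IsLinearUnifier (subst1 x t) (Term.var x) t where
  unifies := by simp [IsUnifierPair, subst1, subst_subst1_of_not_varIn hx]
  linear := by simpa [subst1] using ht
  subst_of_isUnifierPair σ hσ := by
    simpa [subst1, subst_subst1_of_not_varIn hx, IsUnifierPair] using hσ.symm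
  varIn_of_varIn_subst w hw := .inr (by simpa [subst1] using hw)

theorem app_nil (f : F) :
    IsLinearUnifier (Term.var : Subst F V) (Term.app f []) (Term.app f []) where
  unifies := rfl
  linear v := by simp
  subst_of_isUnifierPair σ _ := by simp
  varIn_of_varIn_subst w hw := .inl (by simpa using hw)

theorem app_cons {f : F} {s t : Term F V} {ss ts : List (Term F V)}
    (hst : IsLinearUnifier θ s t) (hsts : IsLinearUnifier θ (Term.app f ss) (Term.app f ts))
    (hdisj : ∀ v, VarIn v s ∨ VarIn v t →
      ¬ (VarIn v (Term.app f ss) ∨ VarIn v (Term.app f ts))) :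
    IsLinearUnifier θ (Term.app f (s :: ss)) (Term.app f (t :: ts)) := by
  have hsubst : ∀ σ : Subst F V, (Term.app f (s :: ss)).subst σ =
      Term.app f (s.subst σ :: (ss.map (·.subst σ))) := fun σ => by simp
  refine ⟨isUnifierPair_app_cons_iff.2 ⟨hst.unifies, hsts.unifies⟩, fun v => ?_,
    fun σ hσ => ?_, fun w hw => ?_⟩
  · rw [hsubst, count_app_cons, ← subst_app]
    by_contra! hv
    have h₁ := count_pos_iff.1 (show 0 < count v (s.subst θ) by linarith [hsts.linear v])
    have h₂ := count_pos_iff.1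
      (show 0 < count v ((Term.app f ss).subst θ) by linarith [hst.linear v])
    exact hdisj v (hst.varIn_of_varIn_subst v h₁) (hsts.varIn_of_varIn_subst v h₂)
  · obtain ⟨hσ₁, hσ₂⟩ := isUnifierPair_app_cons_iff.1 hσ
    have := hsts.subst_of_isUnifierPair σ hσ₂
    simp only [subst_app, List.map_map, app.injEq, true_and, List.map_cons,
      List.cons.injEq] at this ⊢
    exact ⟨hst.subst_of_isUnifierPair σ hσ₁, this⟩
  · rw [hsubst, varIn_app_cons_iff, ← subst_app] at hw
    simp only [varIn_app_cons_iff]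
    rcases hw with hw | hw
    · rcases hst.varIn_of_varIn_subst w hw with h | h <;> simp [h]
    · rcases hsts.varIn_of_varIn_subst w hw with h | h <;> simp [h]

end IsLinearUnifier

theorem exists_isLinearUnifier_app {f : F} {ss ts : List (Term F V)} {τ : Subst F V}
    (ih : ∀ s ∈ ss, ∀ (t : Term F V) (τ : Subst F V), IsUnifierPair τ s t →
      (∀ v, count v s + count v t ≤ 1) → ∃ θ, IsLinearUnifier θ s t)
    (hτ : IsUnifierPair τ (Term.app f ss) (Term.app f ts))
    (hlin : ∀ v, count v (Term.app f ss) + count v (Term.app f ts) ≤ 1) :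
    ∃ θ, IsLinearUnifier θ (Term.app f ss) (Term.app f ts) := by
  induction ss generalizing ts with
  | nil =>
    cases ts with
    | nil => exact ⟨_, .app_nil f⟩
    | cons => simp [IsUnifierPair] at hτ
  | cons s ss ihss =>
    cases ts with
    | nil => simp [IsUnifierPair] at hτ
    | cons t ts =>
      obtain ⟨hτ₁, hτ₂⟩ := isUnifierPair_app_cons_iff.1 hτ
      have hlin' : ∀ v, count v s + count v t + (count v (Term.app f ss) +
          count v (Term.app f ts)) ≤ 1 := fun v => by
        have := hlin v
        rw [count_app_cons, count_app_cons] at this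
        omega
      obtain ⟨θ₁, h₁⟩ := ih s (by simp) t τ hτ₁ fun v => by linarith [hlin' v]
      obtain ⟨θ₂, h₂⟩ := ihss (fun s' hs' => ih s' (by simp [hs'])) hτ₂
        fun v => by linarith [hlin' v]
      have hdisj : ∀ v, VarIn v s ∨ VarIn v t →
          ¬ (VarIn v (Term.app f ss) ∨ VarIn v (Term.app f ts)) := by
        simp only [← count_pos_iff]
        intro v h h'
        have := hlin' v
        omega
      classical
      refine ⟨fun v => if VarIn v s ∨ VarIn v t then θ₁ v else θ₂ v, .app_cons ?_ ?_ hdisj⟩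
      · exact h₁.congr fun v hv => (if_pos hv).symm
      · exact h₂.congr fun v hv => (if_neg fun hv' => hdisj v hv' hv).symm

theorem exists_isLinearUnifier {τ : Subst F V} {A H : Term F V} (hτ : IsUnifierPair τ A H)
    (hlin : ∀ v, count v A + count v H ≤ 1) : ∃ θ, IsLinearUnifier θ A H := by
  induction A generalizing H τ with
  | var x =>
    refine ⟨_, .var_left (fun hx => ?_) fun v => by linarith [hlin v]⟩
    have h₁ := hlin x
    have h₂ := count_pos_iff.2 hx
    rw [count_var, if_pos rfl] at h₁
    omega
  | app f ss ih =>
    cases H with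
    | var z =>
      refine ⟨_, (IsLinearUnifier.var_left (fun hz => ?_) fun v => by linarith [hlin v]).symm⟩
      have h₁ := hlin z
      have h₂ := count_pos_iff.2 hz
      rw [count_var, if_pos rfl] at h₁
      omega
    | app g ts =>
      obtain ⟨rfl, -⟩ : f = g ∧ _ := by simpa [IsUnifierPair] using hτ
      exact exists_isLinearUnifier_app (fun s hs _ _ hτ hlin => ih s hs hτ hlin) hτ hlin

theorem IsLinearUnifier.linear_subst_of_isMGUPair {θ₀ θ : Subst F V} {A H : Term F V}
    (h : IsLinearUnifier θ₀ A H) (hθ : IsMGUPair θ A H) : (A.subst θ).Linear := by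
  obtain ⟨η, hη⟩ := hθ.2 θ₀ h.unifies
  have hAθ : A.subst θ = (A.subst θ₀).subst θ := (h.subst_of_isUnifierPair θ hθ.1).symm
  have hAθ₀ : (A.subst θ).subst η = A.subst θ₀ := by rw [subst_subst, ← hη]
  have hfix : ∀ v, VarIn v (A.subst θ₀) → (θ v).subst η = Term.var v :=
    eq_var_of_subst_eq_self (σ := θ.comp η) (by rw [← subst_subst, ← hAθ, hAθ₀])
  refine Linear.of_subst (by rw [hAθ₀]; exact h.linear) fun w hw => ?_
  rw [hAθ, varIn_subst] at hw
  obtain ⟨v, hv, hwv⟩ := hw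
  exact ⟨v, eq_var_of_subst_eq_var (hfix v hv) hwv⟩

/-- If the pair of atoms `A`, `H` is linear (no variable occurs more
than once in the pair) and `θ` is an mgu of `A` and `H`, then `Aθ` is linear. -/
theorem stmt1 {F V : Type} [DecidableEq V] (A H : Term F V) (θ : Subst F V)
    (hlin : ∀ v, Term.count v A + Term.count v H ≤ 1)
    (hmgu : IsMGUPair θ A H) :
    (A.subst θ).Linear := by
  obtain ⟨θ₀, hθ₀⟩ := exists_isLinearUnifier hmgu.1 hlin
  exact hθ₀.linear_subst_of_isMGUPair hmgu
end

section
/- Each action of MMA⁻ (actions (1), (3), (4), (5), (5')) replaces the current finite equation set by an i-equivalent one, i.e., one having exactly the same set of i-solutions. -/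
variable {F V : Type}

/-! # Possibly infinite terms (i-terms) -/

/-- A labelling of tree positions (finite sequences of natural numbers) by
function symbols or variables. -/
def PreTree (F V : Type) := List ℕ → Option (F ⊕ V)

/-- `t` is an i-term: a finitely branching, possibly infinite ordered tree whose
nodes are labelled by function symbols, with variables allowed at leaves. -/
structure IsITerm (t : PreTree F V) : Prop where
  root : (t []).isSome
  prefix_closed : ∀ p i, (t (p ++ [i])).isSome → (t p).isSome
  sibling : ∀ p i, (t (p ++ [i + 1])).isSome → (t (p ++ [i])).isSome
  var_leaf : ∀ p v, t p = some (Sum.inr v) → ∀ i, t (p ++ [i]) = none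
  fin_branch : ∀ p, ∃ n, ∀ i, n ≤ i → t (p ++ [i]) = none

/-- A possibly infinite term. -/
def ITerm (F V : Type) := { t : PreTree F V // IsITerm t }

/-- An i-substitution maps variables to i-terms. -/
def ISubst (F V : Type) := V → ITerm F V

/-- The i-term (as a tree labelling) obtained by applying an i-substitution to a
finite term. -/
def Term.iapply (θ : ISubst F V) : Term F V → PreTree F V
  | Term.var x => (θ x).1
  | Term.app f ts =>
    let cs := ts.attach.map fun ⟨t, _⟩ => t.iapply θ
    fun p =>
      match p with
      | [] => some (Sum.inl f)
      | i :: p' =>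
        match cs[i]? with
        | some c => c p'
        | none => none

/-- `θ` is an i-solution of the equation set `E`: applying `θ` makes the two sides
of every equation of `E` the same i-term. -/
def ISolution (θ : ISubst F V) (E : EqSet F V) : Prop :=
  ∀ e ∈ E, Term.iapply θ e.1 = Term.iapply θ e.2

/-! An i-solution `θ` of an equation `X = t` makes `X` and `t` the same i-term, so replacing any
occurrences of `X` by `t` leaves the θ-image of every term unchanged; this covers actions (5) and
(5'). Action (1) is the injectivity of the tree node constructor on children lists of equal
length, and actions (3) and (4) are immediate. -/

def PreTree.node (f : F) (cs : List (PreTree F V)) : PreTree F V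
  | [] => some (Sum.inl f)
  | i :: p => match cs[i]? with
    | some c => c p
    | none => none

lemma PreTree.node_inj_of_length_eq {f g : F} {cs ds : List (PreTree F V)}
    (hl : cs.length = ds.length) : node f cs = node g ds ↔ f = g ∧ cs = ds := by
  refine ⟨fun h => ⟨?_, ?_⟩, fun ⟨hfg, hcd⟩ => hfg ▸ hcd ▸ rfl⟩
  · simpa [node] using congrFun h []
  · refine List.ext_getElem hl fun i hi hi' => funext fun p => ?_
    simpa [node, hi, hi'] using congrFun h (i :: p)

lemma Term.iapply_app (θ : ISubst F V) (f : F) (ts : List (Term F V)) :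
    (Term.app f ts).iapply θ = PreTree.node f (ts.map (Term.iapply θ)) := by
  have ha : ts.attach.map (fun u => u.1.iapply θ) = ts.map (Term.iapply θ) := by simp
  simp only [Term.iapply, ha]
  rfl

lemma Term.iapply_app_eq_iff {θ : ISubst F V} {f g : F} {ss ts : List (Term F V)}
    (hl : ss.length = ts.length) :
    (Term.app f ss).iapply θ = (Term.app g ts).iapply θ ↔
      f = g ∧ List.Forall₂ (fun s t => s.iapply θ = t.iapply θ) ss ts := by
  rw [iapply_app, iapply_app, PreTree.node_inj_of_length_eq (by simpa using hl),
    ← List.forall₂_eq_eq_eq, List.forall₂_map_left_iff, List.forall₂_map_right_iff]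

lemma ISolution.zip_iff {θ : ISubst F V} {ss ts : List (Term F V)}
    (hl : ss.length = ts.length) :
    ISolution θ {e | e ∈ ss.zip ts} ↔
      List.Forall₂ (fun s t => s.iapply θ = t.iapply θ) ss ts := by
  simp [ISolution, List.forall₂_iff_zip, hl]

lemma ISolution.union_iff {θ : ISubst F V} {E E' : EqSet F V} :
    ISolution θ (E ∪ E') ↔ ISolution θ E ∧ ISolution θ E' := by
  simp only [ISolution, Set.mem_union, or_imp, forall_and]

lemma ISolution.insert_iff {θ : ISubst F V} {e : Eqn F V} {E : EqSet F V} :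
    ISolution θ (insert e E) ↔ e.1.iapply θ = e.2.iapply θ ∧ ISolution θ E :=
  Set.forall_mem_insert

lemma ISolution.iff_of_mem {θ : ISubst F V} {e : Eqn F V} {E : EqSet F V} (he : e ∈ E) :
    ISolution θ E ↔ e.1.iapply θ = e.2.iapply θ ∧ ISolution θ (E \ {e}) := by
  rw [← ISolution.insert_iff, Set.insert_sdiff_singleton, Set.insert_eq_of_mem he]

lemma ISolution.diff_union_iff {θ : ISubst F V} {e : Eqn F V} {E E' : EqSet F V}
    (he : e ∈ E) (hE' : e.1.iapply θ = e.2.iapply θ ↔ ISolution θ E') :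
    ISolution θ E ↔ ISolution θ (E \ {e} ∪ E') := by
  rw [ISolution.iff_of_mem he, ISolution.union_iff, hE', and_comm]

lemma Term.subst_app_s8 (σ : Subst F V) (f : F) (ts : List (Term F V)) :
    (Term.app f ts).subst σ = Term.app f (ts.map (Term.subst σ)) := by
  simp [Term.subst]

section ReplSome

variable [DecidableEq V] {X : V} {t : Term F V}

lemma ReplSome.iapply_eq {θ : ISubst F V} (hX : (Term.var X).iapply θ = t.iapply θ) :
    ∀ {u u'}, ReplSome X t u u' → u.iapply θ = u'.iapply θ
  | _, _, .keep _ => rfl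
  | _, _, .repl => hX
  | _, _, .app h => (Term.iapply_app_eq_iff h.length_eq).2 ⟨rfl, forall₂ h⟩
where
  forall₂ : ∀ {ss ts}, List.Forall₂ (ReplSome X t) ss ts →
      List.Forall₂ (fun s t => Term.iapply θ s = Term.iapply θ t) ss ts
    | _, _, .nil => .nil
    | _, _, .cons h hs => .cons (ReplSome.iapply_eq hX h) (forall₂ hs)

lemma replSome_subst_subst1 : ∀ u : Term F V, ReplSome X t u (u.subst (subst1 X t))
  | .var v => by
    by_cases hv : v = X
    · subst hv
      simpa [Term.subst, subst1] using ReplSome.repl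
    · simpa [Term.subst, subst1, hv] using ReplSome.keep v
  | .app f ts => Term.subst_app_s8 _ f ts ▸ .app (forall₂ ts)
where
  forall₂ : ∀ ts : List (Term F V),
      List.Forall₂ (ReplSome X t) ts (ts.map (Term.subst (subst1 X t)))
    | [] => .nil
    | u :: us => .cons (replSome_subst_subst1 u) (forall₂ us)

lemma ISolution.insert_image_iff_of_replSome {θ : ISubst F V} {E : EqSet F V}
    {g : Eqn F V → Eqn F V} (hXt : (Term.var X, t) ∈ E)
    (hg : ∀ e ∈ E \ {(Term.var X, t)}, ReplSomeEqn X t e (g e)) :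
    ISolution θ E ↔ ISolution θ (insert (Term.var X, t) (g '' (E \ {(Term.var X, t)}))) := by
  rw [ISolution.iff_of_mem hXt, ISolution.insert_iff]
  refine and_congr_right fun hX => ?_
  simp only [ISolution, Set.forall_mem_image]
  refine forall₂_congr fun e he => ?_
  rw [(hg e he).1.iapply_eq hX, (hg e he).2.iapply_eq hX]

end ReplSome

/-- Each action of MMA⁻ (actions (1), (3), (4), (5), (5')) replaces
the current equation set by an i-equivalent one: one having exactly the same set of
i-solutions. -/
theorem stmt8 {F V : Type} [DecidableEq V] (l : MLabel F V) (s s' : MState F V)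
    (h : MMStepL l s s') (θ : ISubst F V) :
    ISolution θ s.1 ↔ ISolution θ s'.1 := by
  cases h with
  | decomp hmem hl =>
    exact ISolution.diff_union_iff hmem <| by
      rw [ISolution.zip_iff hl, Term.iapply_app_eq_iff hl, and_iff_right rfl]
  | del hmem =>
    simpa only [Set.union_empty] using
      ISolution.diff_union_iff (E' := ∅) hmem (iff_of_true rfl fun _ => False.elim)
  | orient hmem _ =>
    exact ISolution.diff_union_iff hmem <| by simp [ISolution, eq_comm]
  | elim hmem _ _ =>
    exact ISolution.insert_image_iff_of_replSome hmem fun e _ =>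
      ⟨replSome_subst_subst1 e.1, replSome_subst_subst1 e.2⟩
  | elim' hmem _ _ _ hg => exact ISolution.insert_image_iff_of_replSome hmem hg
end

section
/- Every semi-solved finite equation set has an i-solution. -/
variable {F V : Type}

/-! A variable-headed equation set is a (possibly cyclic) recursive definition of its
left-hand sides, and its i-solution is the infinite unfolding of that definition. Chasing
variable-to-variable equations from `X` ends at a non-variable right-hand side, at a variable
without equation, or runs into a cycle of variables; the members of such a cycle can all be sent
to one common variable. Once every variable is resolved this way, unfolding the resulting
assignment position by position gives a regular tree for each variable, and an equation
`X = t` holds because both sides unfold through the same head term. -/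

theorem Function.fixedPts_reachable_eq_of_not_isFixedPt {α : Type*} {f : α → α} {x : α}
    (hx : ¬ Function.IsFixedPt f x) :
    {z | Function.IsFixedPt f z ∧ ∃ n, f^[n] x = z} =
      {z | Function.IsFixedPt f z ∧ ∃ n, f^[n] (f x) = z} := by
  ext z
  refine and_congr_right fun hz => ⟨?_, fun ⟨n, hn⟩ => ⟨n + 1, hn⟩⟩
  rintro ⟨_ | n, rfl⟩
  · exact absurd hz hx
  · exact ⟨n, rfl⟩

namespace Term

def root : Term F V → F ⊕ V
  | var X => Sum.inr X
  | app f _ => Sum.inl f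

def args : Term F V → List (Term F V)
  | var _ => []
  | app _ ts => ts

theorem args_eq_nil_of_root_eq_inr {t : Term F V} {X : V} (h : t.root = Sum.inr X) :
    t.args = [] := by
  cases t with
  | var _ => rfl
  | app _ _ => cases h

def deref (ρ : V → Term F V) : Term F V → Term F V
  | var X => ρ X
  | t@(app _ _) => t

/-- The possibly infinite tree obtained from `t` by replacing, again and again, every variable
`X` by `ρ X`. Only the head is unfolded at each position, so the recursion is on the position. -/
def unfold (ρ : V → Term F V) : Term F V → List ℕ → Option (F ⊕ V)
  | t, [] => some (t.deref ρ).root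
  | t, i :: p => (t.deref ρ).args[i]?.bind fun s => unfold ρ s p

variable (ρ : V → Term F V)

theorem isSome_unfold_of_append {p : List ℕ} {i : ℕ} {t : Term F V}
    (h : (t.unfold ρ (p ++ [i])).isSome) : (t.unfold ρ p).isSome := by
  induction p generalizing t with
  | nil => rfl
  | cons j p ih =>
    simp only [List.cons_append, unfold] at h ⊢
    cases hs : (t.deref ρ).args[j]? with
    | none => simp [hs] at h
    | some s => simp only [hs, Option.bind_some] at h ⊢; exact ih h

theorem isSome_unfold_of_append_succ {p : List ℕ} {i : ℕ} {t : Term F V}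
    (h : (t.unfold ρ (p ++ [i + 1])).isSome) : (t.unfold ρ (p ++ [i])).isSome := by
  induction p generalizing t with
  | nil =>
    simp only [List.nil_append, unfold] at h ⊢
    have hi : i + 1 < (t.deref ρ).args.length := by
      by_contra hi
      simp [List.getElem?_eq_none (Nat.le_of_not_lt hi)] at h
    simp [List.getElem?_eq_getElem (Nat.lt_of_succ_lt hi)]
  | cons j p ih =>
    simp only [List.cons_append, unfold] at h ⊢
    cases hs : (t.deref ρ).args[j]? with
    | none => simp [hs] at h
    | some s => simp only [hs, Option.bind_some] at h ⊢; exact ih h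

theorem unfold_append_eq_none_of_eq_inr {p : List ℕ} {t : Term F V} {X : V}
    (h : t.unfold ρ p = some (Sum.inr X)) (i : ℕ) : t.unfold ρ (p ++ [i]) = none := by
  induction p generalizing t with
  | nil =>
    simp only [unfold, Option.some.injEq] at h
    simp [unfold, args_eq_nil_of_root_eq_inr h]
  | cons j p ih =>
    simp only [List.cons_append, unfold] at h ⊢
    cases hs : (t.deref ρ).args[j]? with
    | none => rfl
    | some s => simp only [hs, Option.bind_some] at h ⊢; exact ih h

theorem exists_unfold_append_eq_none (p : List ℕ) (t : Term F V) :
    ∃ n, ∀ i, n ≤ i → t.unfold ρ (p ++ [i]) = none := by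
  induction p generalizing t with
  | nil => exact ⟨(t.deref ρ).args.length, fun i hi => by simp [unfold, hi]⟩
  | cons j p ih =>
    cases hs : (t.deref ρ).args[j]? with
    | none => exact ⟨0, fun i _ => by simp [unfold, hs]⟩
    | some s =>
      obtain ⟨n, hn⟩ := ih s
      exact ⟨n, fun i hi => by simpa [unfold, hs] using hn i hi⟩

theorem isITerm_unfold (t : Term F V) : IsITerm (t.unfold ρ) where
  root := rfl
  prefix_closed _ _ := isSome_unfold_of_append ρ
  sibling _ _ := isSome_unfold_of_append_succ ρ
  var_leaf _ _ := unfold_append_eq_none_of_eq_inr ρ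
  fin_branch p := exists_unfold_append_eq_none ρ p t

theorem unfold_eq_of_deref_eq {s t : Term F V} (h : s.deref ρ = t.deref ρ) :
    s.unfold ρ = t.unfold ρ := by
  funext p
  cases p <;> simp only [unfold, h]

end Term

def unfoldSubst (ρ : V → Term F V) : ISubst F V :=
  fun X => ⟨(Term.var X).unfold ρ, Term.isITerm_unfold ρ _⟩

theorem iapply_unfoldSubst (ρ : V → Term F V) (t : Term F V) :
    t.iapply (unfoldSubst ρ) = t.unfold ρ := by
  funext p
  induction p generalizing t with
  | nil => cases t <;> rw [Term.iapply] <;> rfl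
  | cons i p ih =>
    cases t with
    | var _ => rw [Term.iapply]; rfl
    | app f ts =>
      rw [Term.iapply]
      cases hs : ts[i]? <;> simp [hs, Term.unfold, Term.deref, Term.args, ih]

theorem iSolution_unfoldSubst {ρ : V → Term F V} {E : EqSet F V}
    (hvar : ∀ e ∈ E, ∃ X, e.1 = Term.var X)
    (hρ : ∀ X t, (Term.var X, t) ∈ E → ρ X = t.deref ρ) :
    ISolution (unfoldSubst ρ) E := by
  rintro ⟨s, t⟩ he
  obtain ⟨X, rfl⟩ := hvar _ he
  simp only [iapply_unfoldSubst]
  exact Term.unfold_eq_of_deref_eq ρ (hρ X t he)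

namespace EqSet

variable (E : EqSet F V)

open Classical in
noncomputable def rhs (X : V) : Term F V :=
  if h : ∃ t, (Term.var X, t) ∈ E then h.choose else Term.var X

noncomputable def varStep (X : V) : V :=
  match rhs E X with
  | Term.var Y => Y
  | Term.app _ _ => X

/-- A singleton, or empty when the chain of variable-to-variable equations from `X` runs into a
cycle. -/
def chainEnds (X : V) : Set V :=
  {Z | Function.IsFixedPt (varStep E) Z ∧ ∃ n, (varStep E)^[n] X = Z}

open Classical in
/-- Every variable on a cycle of variable-to-variable equations is resolved to the same
variable (`Classical.ofNonempty` does not depend on the witness `X`). -/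
noncomputable def resolve (X : V) : Term F V :=
  if h : (chainEnds E X).Nonempty then rhs E h.some
  else haveI : Nonempty V := ⟨X⟩; Term.var Classical.ofNonempty

variable {E}

theorem rhs_eq_of_mem (hu : ∀ e ∈ E, ∀ e' ∈ E, e.1 = e'.1 → e = e') {X : V} {t : Term F V}
    (h : (Term.var X, t) ∈ E) : rhs E X = t := by
  have hex : ∃ t, (Term.var X, t) ∈ E := ⟨t, h⟩
  rw [rhs, dif_pos hex]
  exact (Prod.ext_iff.mp (hu _ hex.choose_spec _ h rfl)).2

theorem resolve_eq_of_rhs_eq_app {X : V} {f : F} {ts : List (Term F V)}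
    (h : rhs E X = Term.app f ts) : resolve E X = Term.app f ts := by
  have hX : Function.IsFixedPt (varStep E) X := by simp [Function.IsFixedPt, varStep, h]
  have hne : (chainEnds E X).Nonempty := ⟨X, hX, 0, rfl⟩
  obtain ⟨-, m, hm⟩ := hne.some_mem
  have hsome : hne.some = X := by
    rw [← hm, Function.iterate_fixed hX]
  rw [resolve, dif_pos hne, hsome, h]

theorem resolve_eq_of_rhs_eq_var {X Y : V} (h : rhs E X = Term.var Y) :
    resolve E X = resolve E Y := by
  have hstep : varStep E X = Y := by simp [varStep, h]
  by_cases hX : Function.IsFixedPt (varStep E) X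
  · rw [← hstep, hX.eq]
  · have hends : chainEnds E X = chainEnds E Y := by
      rw [chainEnds, Function.fixedPts_reachable_eq_of_not_isFixedPt hX, hstep, chainEnds]
    unfold resolve
    rw [hends]

theorem resolve_eq_deref (hu : ∀ e ∈ E, ∀ e' ∈ E, e.1 = e'.1 → e = e') {X : V}
    {t : Term F V} (h : (Term.var X, t) ∈ E) : resolve E X = t.deref (resolve E) := by
  cases t with
  | var Y => exact resolve_eq_of_rhs_eq_var (rhs_eq_of_mem hu h)
  | app f ts => exact resolve_eq_of_rhs_eq_app (rhs_eq_of_mem hu h)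

end EqSet

theorem stmt14_general {F V : Type} (E : EqSet F V) (h : SemiSolved E) :
    ∃ θ : ISubst F V, ISolution θ E := by
  obtain ⟨hvar, hu, -, -⟩ := h
  exact ⟨unfoldSubst (EqSet.resolve E),
    iSolution_unfoldSubst hvar fun _ _ => EqSet.resolve_eq_deref hu⟩

/-- Every semi-solved finite equation set has an i-solution. -/
theorem stmt14 {F V : Type} (E : EqSet F V) (hfin : E.Finite) (h : SemiSolved E) :
    ∃ θ : ISubst F V, ISolution θ E :=
  stmt14_general E h
end

section
/- If a nonempty finite equation set E is not semi-solved, then some action of MMA⁻ among (1), (2), (3), (4), (5) is applicable to E. Consequently, every finite maximal run of MMA⁻ either terminates with failure (by performing action (2)) or terminates with success (its final equation set is semi-solved). -/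
variable {F V : Type}

lemma mma_key {F V : Type} [DecidableEq V] (E : EqSet F V) (H : Set V)
    (hc : ¬ Clash E)
    (hs : ¬ ∃ (l : MLabel F V) (s' : MState F V), MMStepL l (E, H) s') :
    SemiSolved E := by
  have hB : ∀ X : V, (Term.var X, Term.var X) ∉ E :=
    fun X h => hs ⟨_, _, MMStepL.del h⟩
  have hne : ∀ (X : V) (t : Term F V), (Term.var X, t) ∈ E → Term.var X ≠ t →
      ¬ occursElsewhere X (Term.var X, t) E :=
    fun X t h1 h2 h3 => hs ⟨_, _, MMStepL.elim h1 h2 h3⟩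
  have hvar : ∀ e ∈ E, ∃ X, e.1 = Term.var X := by
    rintro ⟨a, b⟩ he
    cases a with
    | var X => exact ⟨X, rfl⟩
    | app f ss =>
      exfalso
      cases b with
      | var Y =>
        exact hs ⟨_, _, MMStepL.orient he (by simp [Term.IsVar])⟩
      | app g ts =>
        by_cases hfg : f = g ∧ ss.length = ts.length
        · obtain ⟨rfl, hlen⟩ := hfg
          exact hs ⟨_, _, MMStepL.decomp he hlen⟩
        · refine hc ⟨f, ss, g, ts, he, ?_⟩
          by_contra hcon
          push_neg at hcon
          exact hfg ⟨hcon.1, hcon.2⟩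
  refine ⟨hvar, ?_, ?_, ?_⟩
  · rintro ⟨a, b⟩ he ⟨a', b'⟩ he' heq
    obtain ⟨X, hX⟩ := hvar _ he
    simp only at hX heq
    subst hX; subst heq
    by_contra hbb
    have hb' : b ≠ b' := by
      intro h; exact hbb (by rw [h])
    have hXb : Term.var X ≠ b := fun h => hB X (h ▸ he)
    exact hne X b he hXb ⟨(Term.var X, b'), he',
      by simp [Prod.ext_iff, Ne.symm hb'], Or.inl Term.VarIn.var⟩
  · rintro ⟨a, b⟩ he
    obtain ⟨X, hX⟩ := hvar _ he
    simp only at hX ⊢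
    subst hX
    intro h
    exact hB X (h ▸ he)
  · rintro X ⟨e', he', hvin⟩ ⟨t, ht⟩
    have hXt : Term.var X ≠ t := by
      intro h; exact hB X (h ▸ ht)
    by_cases hee : e' = (Term.var X, t)
    · subst hee
      exact Relation.TransGen.single ⟨t, ht, hvin⟩
    · exact absurd ⟨e', he', hee, Or.inr hvin⟩ (hne X t ht hXt)

/-- If a nonempty finite equation set `E` is not semi-solved, then
some action of MMA⁻ among (1), (2), (3), (4), (5) is applicable to `E` (action (5')
is excluded since the history is empty).  Consequently, every finite maximal run of
MMA⁻ either terminates with failure (by performing action (2)) or terminates with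
success: if no MMA⁻ step is possible at a reached configuration, then the equation
set contains a clash or is semi-solved. -/
theorem stmt15 {F V : Type} [DecidableEq V] (E : EqSet F V) (hfin : E.Finite) :
    (E.Nonempty → ¬ SemiSolved E →
      Clash E ∨ ∃ (l : MLabel F V) (s' : MState F V), MMStepL l (E, ∅) s') ∧
    (∀ (E' : EqSet F V) (H : Set V), MMReach (E, ∅) (E', H) →
      (¬ ∃ s', MMStep (E', H) s') → Clash E' ∨ SemiSolved E') := by
  constructor
  · intro _ hnss
    by_contra hcon
    push_neg at hcon
    exact hnss (mma_key E ∅ hcon.1 (by rintro ⟨l, s', h⟩; exact hcon.2 l s' h))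
  · intro E' H _ hnostep
    by_cases hc : Clash E'
    · exact Or.inl hc
    · refine Or.inr (mma_key E' H hc ?_)
      rintro ⟨l, s', hstep⟩
      exact hnostep ⟨s', l, hstep⟩
end
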